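/- arXiv:1908.02245 — 2 statements merged into one kernel-verified Lean document; each statement's English description precedes it below -/
import Mathlib

section
/- Let R(A,B,C) be a recollement of module categories such that in addition i^*(j_!(Y)) ≅ 0 and i^!(j_!(Y)) ≅ 0 for every Y in mod C. If 𝒮_L is a semibrick in mod A and 𝒮_R is a semibrick in mod C, then the union i_*(𝒮_L) ∪ j_!(𝒮_R) = {i_*(S) : S ∈ 𝒮_L} ∪ {j_!(S) : S ∈ 𝒮_R} is a semibrick in mod B. -/
open CategoryTheory CategoryTheory.Limits

universe v u₁ u₂ u₃

/-- A module `S` is a *brick* if its endomorphism ring is a division ring, i.e.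
it is nontrivial (`𝟙 S ≠ 0`) and every nonzero endomorphism is invertible. -/
def IsBrick {R : Type u₁} [Ring R] (S : ModuleCat.{v} R) : Prop :=
  𝟙 S ≠ 0 ∧ ∀ f : S ⟶ S, f ≠ 0 → IsIso f

/-- A set of modules is a *semibrick* if every member is a brick and there is no nonzero
homomorphism between non-isomorphic members. -/
def IsSemibrick {R : Type u₁} [Ring R] (𝒮 : Set (ModuleCat.{v} R)) : Prop :=
  (∀ S ∈ 𝒮, IsBrick S) ∧
    ∀ S₁ ∈ 𝒮, ∀ S₂ ∈ 𝒮, ¬ Nonempty (S₁ ≅ S₂) → ∀ f : S₁ ⟶ S₂, f = 0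

/-- A recollement of `mod B` relative to `mod A` and `mod C`: six additive functors
with the four adjunctions, the three full embeddings, and the condition that the
essential image of `i_*` is the kernel of `j^*`. -/
structure ModuleRecollement (A : Type u₁) (B : Type u₂) (C : Type u₃)
    [Ring A] [Ring B] [Ring C] where
  /-- `i^* : mod B → mod A` -/
  iUpperStar : ModuleCat.{v} B ⥤ ModuleCat.{v} A
  /-- `i_* : mod A → mod B` -/
  iStar : ModuleCat.{v} A ⥤ ModuleCat.{v} B
  /-- `i^! : mod B → mod A` -/
  iShriek : ModuleCat.{v} B ⥤ ModuleCat.{v} A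
  /-- `j_! : mod C → mod B` -/
  jLowerShriek : ModuleCat.{v} C ⥤ ModuleCat.{v} B
  /-- `j^* : mod B → mod C` -/
  jUpperStar : ModuleCat.{v} B ⥤ ModuleCat.{v} C
  /-- `j_* : mod C → mod B` -/
  jStar : ModuleCat.{v} C ⥤ ModuleCat.{v} B
  iUpperStar_additive : iUpperStar.Additive
  iStar_additive : iStar.Additive
  iShriek_additive : iShriek.Additive
  jLowerShriek_additive : jLowerShriek.Additive
  jUpperStar_additive : jUpperStar.Additive
  jStar_additive : jStar.Additive
  /-- `(i^*, i_*)` is an adjoint pair -/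
  adj₁ : iUpperStar ⊣ iStar
  /-- `(i_*, i^!)` is an adjoint pair -/
  adj₂ : iStar ⊣ iShriek
  /-- `(j_!, j^*)` is an adjoint pair -/
  adj₃ : jLowerShriek ⊣ jUpperStar
  /-- `(j^*, j_*)` is an adjoint pair -/
  adj₄ : jUpperStar ⊣ jStar
  iStar_full : iStar.Full
  iStar_faithful : iStar.Faithful
  jLowerShriek_full : jLowerShriek.Full
  jLowerShriek_faithful : jLowerShriek.Faithful
  jStar_full : jStar.Full
  jStar_faithful : jStar.Faithful
  /-- the essential image of `i_*` equals the kernel of `j^*` -/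
  essImage_eq_ker : ∀ X : ModuleCat.{v} B,
    (∃ Y : ModuleCat.{v} A, Nonempty (iStar.obj Y ≅ X)) ↔ IsZero (jUpperStar.obj X)

/-! A fully faithful functor preserving zero morphisms carries bricks to bricks and semibricks to
semibricks, so `i_*(𝒮_L)` and `j_!(𝒮_R)` are semibricks of `mod B`. Their union is one as soon as
all homomorphisms between the two parts vanish, and by adjunction
`Hom(i_* X, j_! Y) ≅ Hom(X, i^! j_! Y) = 0` and `Hom(j_! Y, i_* X) ≅ Hom(i^* j_! Y, X) = 0`. -/

namespace CategoryTheory.Adjunction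

variable {𝒞 : Type*} {𝒟 : Type*} [Category 𝒞] [Category 𝒟] {F : 𝒞 ⥤ 𝒟} {G : 𝒟 ⥤ 𝒞}

lemma eq_zero_of_isZero_right_obj [HasZeroMorphisms 𝒟] (adj : F ⊣ G) {X : 𝒞} {Y : 𝒟}
    (hY : IsZero (G.obj Y)) (f : F.obj X ⟶ Y) : f = 0 :=
  (adj.homEquiv X Y).injective (hY.eq_of_tgt _ _)

lemma eq_zero_of_isZero_left_obj [HasZeroMorphisms 𝒞] (adj : F ⊣ G) {X : 𝒞} {Y : 𝒟}
    (hX : IsZero (F.obj X)) (f : X ⟶ G.obj Y) : f = 0 :=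
  (adj.homEquiv X Y).symm.injective (hX.eq_of_src _ _)

end CategoryTheory.Adjunction

section

variable {R : Type u₁} {R' : Type u₂} [Ring R] [Ring R']
  (F : ModuleCat.{v} R ⥤ ModuleCat.{v} R') [F.Full] [F.Faithful] [F.PreservesZeroMorphisms]

lemma IsBrick.map {S : ModuleCat.{v} R} (hS : IsBrick S) : IsBrick (F.obj S) := by
  refine ⟨fun h => hS.1 (F.map_injective (by simpa using h)), fun f hf => ?_⟩
  obtain ⟨g, rfl⟩ := F.map_surjective f
  have := hS.2 g fun hg => hf (by simp [hg])
  infer_instance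

lemma IsSemibrick.image {𝒮 : Set (ModuleCat.{v} R)} (h𝒮 : IsSemibrick 𝒮) :
    IsSemibrick (F.obj '' 𝒮) := by
  refine ⟨fun _ ⟨S, hS, hFS⟩ => hFS ▸ (h𝒮.1 S hS).map F, ?_⟩
  rintro _ ⟨S₁, hS₁, rfl⟩ _ ⟨S₂, hS₂, rfl⟩ hne f
  obtain ⟨g, rfl⟩ := F.map_surjective f
  rw [h𝒮.2 S₁ hS₁ S₂ hS₂ (fun ⟨e⟩ => hne ⟨F.mapIso e⟩) g, F.map_zero]

end

lemma IsSemibrick.union {R : Type u₁} [Ring R] {𝒮₁ 𝒮₂ : Set (ModuleCat.{v} R)}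
    (h₁ : IsSemibrick 𝒮₁) (h₂ : IsSemibrick 𝒮₂)
    (h₁₂ : ∀ S₁ ∈ 𝒮₁, ∀ S₂ ∈ 𝒮₂, ∀ f : S₁ ⟶ S₂, f = 0)
    (h₂₁ : ∀ S₂ ∈ 𝒮₂, ∀ S₁ ∈ 𝒮₁, ∀ f : S₂ ⟶ S₁, f = 0) :
    IsSemibrick (𝒮₁ ∪ 𝒮₂) := by
  refine ⟨fun S hS => hS.elim (h₁.1 S) (h₂.1 S), ?_⟩
  rintro S (hS | hS) T (hT | hT)
  exacts [h₁.2 S hS T hT, fun _ => h₁₂ S hS T hT, fun _ => h₂₁ S hS T hT, h₂.2 S hS T hT]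

/-- In a recollement with `i^* j_! = 0` and `i^! j_! = 0`, the union of the image of a
semibrick of `mod A` under `i_*` with the image of a semibrick of `mod C` under `j_!` is a
semibrick of `mod B`. -/
theorem glued_semibrick_jLowerShriek {A : Type u₁} {B : Type u₂} {C : Type u₃}
    [Ring A] [Ring B] [Ring C] (R : ModuleRecollement.{v} A B C)
    (h₁ : ∀ Y : ModuleCat.{v} C, IsZero (R.iUpperStar.obj (R.jLowerShriek.obj Y)))
    (h₂ : ∀ Y : ModuleCat.{v} C, IsZero (R.iShriek.obj (R.jLowerShriek.obj Y)))
    (𝒮L : Set (ModuleCat.{v} A)) (𝒮R : Set (ModuleCat.{v} C))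
    (hL : IsSemibrick 𝒮L) (hR : IsSemibrick 𝒮R) :
    IsSemibrick (R.iStar.obj '' 𝒮L ∪ R.jLowerShriek.obj '' 𝒮R) := by
  have := R.iStar_additive
  have := R.iStar_full
  have := R.iStar_faithful
  have := R.jLowerShriek_additive
  have := R.jLowerShriek_full
  have := R.jLowerShriek_faithful
  refine (hL.image R.iStar).union (hR.image R.jLowerShriek) ?_ ?_
  · rintro _ ⟨X, -, rfl⟩ _ ⟨Y, -, rfl⟩ f
    exact R.adj₂.eq_zero_of_isZero_right_obj (h₂ Y) f
  · rintro _ ⟨Y, -, rfl⟩ _ ⟨X, -, rfl⟩ f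
    exact R.adj₁.eq_zero_of_isZero_left_obj (h₁ Y) f
end

section
/- Let R(A,B,C) be a recollement of module categories. If there are only finitely many isomorphism classes of bricks in mod B, then there are only finitely many isomorphism classes of bricks in mod A and only finitely many isomorphism classes of bricks in mod C. -/
open CategoryTheory CategoryTheory.Limits

universe v u₁ u₂ u₃

/-- `mod R` has only finitely many isomorphism classes of bricks: there is a finite list of
bricks such that every brick is isomorphic to a member of the list. -/
def HasFinitelyManyBricks (R : Type u₁) [Ring R] : Prop :=
  ∃ L : List (ModuleCat.{v} R), (∀ S ∈ L, IsBrick S) ∧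
    ∀ S : ModuleCat.{v} R, IsBrick S → ∃ T ∈ L, Nonempty (S ≅ T)

/-- A brick of `mod A` is determined up to isomorphism by the listed brick of `mod B` its image
is isomorphic to, so one chosen preimage per listed brick suffices. -/
lemma HasFinitelyManyBricks.of_functor {A : Type u₁} {B : Type u₂} [Ring A] [Ring B]
    (F : ModuleCat.{v} A ⥤ ModuleCat.{v} B)
    (map_brick : ∀ S, IsBrick S → IsBrick (F.obj S))
    (reflect_iso : ∀ S S', Nonempty (F.obj S ≅ F.obj S') → Nonempty (S ≅ S'))
    (hB : HasFinitelyManyBricks.{v} B) : HasFinitelyManyBricks.{v} A := by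
  obtain ⟨L, -, hL⟩ := hB
  let Lift : ModuleCat.{v} B → Prop := fun T => ∃ S, IsBrick S ∧ Nonempty (F.obj S ≅ T)
  have hfin : {S | ∃ T, ∃ hT : T ∈ L ∧ Lift T, hT.2.choose = S}.Finite :=
    (L.finite_toSet.subset fun _ (hT : _ ∧ Lift _) => hT.1).dependent_image
      fun _ (hT : _ ∧ Lift _) => hT.2.choose
  refine ⟨hfin.toFinset.toList, ?_, ?_⟩
  · simp only [Finset.mem_toList, Set.Finite.mem_toFinset, Set.mem_ofPred_eq]
    rintro _ ⟨T, hT, rfl⟩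
    exact hT.2.choose_spec.1
  · intro S hS
    obtain ⟨T, hTL, ⟨e⟩⟩ := hL (F.obj S) (map_brick S hS)
    have hT : T ∈ L ∧ Lift T := ⟨hTL, S, hS, ⟨e⟩⟩
    obtain ⟨e'⟩ := hT.2.choose_spec.2
    refine ⟨hT.2.choose, ?_, reflect_iso _ _ ⟨e ≪≫ e'.symm⟩⟩
    simpa only [Finset.mem_toList, Set.Finite.mem_toFinset] using ⟨T, hT, rfl⟩

lemma IsBrick.map_s10 {A : Type u₁} {B : Type u₂} [Ring A] [Ring B]
    (F : ModuleCat.{v} A ⥤ ModuleCat.{v} B) [F.PreservesZeroMorphisms] [F.Full] [F.Faithful]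
    {S : ModuleCat.{v} A} (hS : IsBrick S) : IsBrick (F.obj S) := by
  refine ⟨fun h => hS.1 (F.map_injective ?_), fun g hg => ?_⟩
  · rw [F.map_id, F.map_zero, h]
  · obtain ⟨f, rfl⟩ := F.map_surjective g
    have := hS.2 f (fun hf => hg (by rw [hf, F.map_zero]))
    infer_instance

lemma HasFinitelyManyBricks.of_fullyFaithful {A : Type u₁} {B : Type u₂} [Ring A] [Ring B]
    (F : ModuleCat.{v} A ⥤ ModuleCat.{v} B) [F.PreservesZeroMorphisms] [F.Full] [F.Faithful]
    (hB : HasFinitelyManyBricks.{v} B) : HasFinitelyManyBricks.{v} A :=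
  hB.of_functor F (fun _ => IsBrick.map_s10 F) fun _ _ ⟨e⟩ => ⟨F.preimageIso e⟩

/-- In a recollement of module categories, if `mod B` has only finitely many isomorphism
classes of bricks, then so do `mod A` and `mod C`. -/
theorem finitelyManyBricks_of_recollement {A : Type u₁} {B : Type u₂} {C : Type u₃}
    [Ring A] [Ring B] [Ring C] (R : ModuleRecollement.{v} A B C)
    (hB : HasFinitelyManyBricks.{v} B) :
    HasFinitelyManyBricks.{v} A ∧ HasFinitelyManyBricks.{v} C := by
  have := R.iStar_additive
  have := R.iStar_full
  have := R.iStar_faithful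
  have := R.jLowerShriek_additive
  have := R.jLowerShriek_full
  have := R.jLowerShriek_faithful
  exact ⟨hB.of_fullyFaithful R.iStar, hB.of_fullyFaithful R.jLowerShriek⟩
end
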